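/- On the round sphere S^n, for u ∈ C³(S^n) and 1 ≤ m ≤ n−1, the divergence of the Newton tensor of the Hessian satisfies ∇_j [T_m]^j_i(D²u) = −(n−m) u_j [T_{m−1}]^j_i(D²u). -/

import Mathlib

/-!
Write the lower indices as `(i, p, L)` and the upper ones as `(j, q, U)`, so that the left-hand
side is a sum over `(L, U)` of `∏ A` times `∑_{j,p,q} δ^{j q U}_{i p L} ∇_j u_{pq}`. Since `δ` is
antisymmetric in `j ↔ q`, the inner sum is half of the same sum against the commutator
`∇_j u_{pq} - ∇_q u_{pj}`, which the Ricci identity of the round sphere turns into first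
derivatives of `u`. Both resulting terms are traces of `δ`, evaluated by the contraction identity
`∑_a δ^{a J}_{a I} = (n - k) δ^J_I` (Laplace expansion of `δ` as a determinant).
-/

open scoped BigOperators

/-- Generalized Kronecker delta `δ^{J}_{I}` (fully antisymmetric in upper and lower indices). -/
noncomputable def gkdelta (n k : ℕ) (J I : Fin k → Fin n) : ℝ :=
  ∑ σ : Equiv.Perm (Fin k), ((Equiv.Perm.sign σ : ℤ) : ℝ) *
    ∏ a : Fin k, (if J (σ a) = I a then (1:ℝ) else 0)

/-- `σ_k(A) = (1/k!) δ^{j_1…j_k}_{i_1…i_k} A^{i_1}_{j_1} ⋯ A^{i_k}_{j_k}`. -/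
noncomputable def sigmaPoly (n k : ℕ) (A : Matrix (Fin n) (Fin n) ℝ) : ℝ :=
  (1 / (Nat.factorial k : ℝ)) *
    ∑ I : Fin k → Fin n, ∑ J : Fin k → Fin n,
      gkdelta n k J I * ∏ a : Fin k, A (I a) (J a)

/-- Newton transformation tensor `[T_k]^j_i(A) = (1/k!) δ^{j j_1…j_k}_{i i_1…i_k} A^{i_1}_{j_1}⋯A^{i_k}_{j_k}`. -/
noncomputable def newtonT (n k : ℕ) (A : Matrix (Fin n) (Fin n) ℝ) (j i : Fin n) : ℝ :=
  (1 / (Nat.factorial k : ℝ)) *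
    ∑ I : Fin k → Fin n, ∑ J : Fin k → Fin n,
      gkdelta n (k+1) (Fin.cons j J) (Fin.cons i I) * ∏ a : Fin k, A (I a) (J a)

section GeneralizedKronecker

variable {n : ℕ}

def kroneckerMatrix {k : ℕ} (J I : Fin k → Fin n) : Matrix (Fin k) (Fin k) ℝ :=
  Matrix.of fun a b => if J a = I b then 1 else 0

theorem gkdelta_eq_det {k : ℕ} (J I : Fin k → Fin n) :
    gkdelta n k J I = (kroneckerMatrix J I).det := by
  simp [gkdelta, Matrix.det_apply, kroneckerMatrix, Units.smul_def]

theorem gkdelta_comp_perm_left {k : ℕ} (σ : Equiv.Perm (Fin k)) (J I : Fin k → Fin n) :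
    gkdelta n k (J ∘ σ) I = Equiv.Perm.sign σ * gkdelta n k J I := by
  simp only [gkdelta_eq_det]
  exact Matrix.det_permute σ (kroneckerMatrix J I)

theorem gkdelta_comp_perm_right {k : ℕ} (σ : Equiv.Perm (Fin k)) (J I : Fin k → Fin n) :
    gkdelta n k J (I ∘ σ) = Equiv.Perm.sign σ * gkdelta n k J I := by
  simp only [gkdelta_eq_det]
  exact Matrix.det_permute' σ (kroneckerMatrix J I)

theorem gkdelta_cons_swap_left {k : ℕ} (x y : Fin n) (t : Fin k → Fin n)
    (I : Fin (k + 2) → Fin n) :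
    gkdelta n (k + 2) (Fin.cons x (Fin.cons y t)) I
      = -gkdelta n (k + 2) (Fin.cons y (Fin.cons x t)) I := by
  rw [show (Fin.cons x (Fin.cons y t) : Fin (k + 2) → Fin n)
      = Fin.cons y (Fin.cons x t) ∘ Equiv.swap 0 1 from
    (Matrix.cons_cons_comp_swap_zero_one y x t).symm, gkdelta_comp_perm_left,
    Equiv.Perm.sign_swap Fin.zero_ne_one]
  simp

theorem gkdelta_cons_swap_right {k : ℕ} (x y : Fin n) (t : Fin k → Fin n)
    (J : Fin (k + 2) → Fin n) :
    gkdelta n (k + 2) J (Fin.cons x (Fin.cons y t))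
      = -gkdelta n (k + 2) J (Fin.cons y (Fin.cons x t)) := by
  rw [show (Fin.cons x (Fin.cons y t) : Fin (k + 2) → Fin n)
      = Fin.cons y (Fin.cons x t) ∘ Equiv.swap 0 1 from
    (Matrix.cons_cons_comp_swap_zero_one y x t).symm, gkdelta_comp_perm_right,
    Equiv.Perm.sign_swap Fin.zero_ne_one]
  simp

theorem Fin.cons_self_succ_succAbove {α : Type*} {k : ℕ} (J : Fin k → α) (c d : Fin k) :
    (Fin.cons (J c) J : Fin (k + 1) → α) (c.succ.succAbove d) = J (c.cycleRange.symm d) := by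
  obtain ⟨e, rfl⟩ := c.cycleRange.surjective d
  rw [Fin.succAbove_cycleRange, Equiv.symm_apply_apply]
  rcases eq_or_ne e c with rfl | h
  · simp
  · rw [Equiv.swap_apply_of_ne_of_ne (Fin.succ_ne_zero e) ((Fin.succ_injective _).ne h),
      Fin.cons_succ]

theorem det_kroneckerMatrix_cons_cons {k : ℕ} (a : Fin n) (J I : Fin k → Fin n) :
    (kroneckerMatrix (Fin.cons a J) (Fin.cons a I)).det
      = (kroneckerMatrix J I).det
        - ∑ c : Fin k, if J c = a then (kroneckerMatrix J I).det else 0 := by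
  rw [Matrix.det_succ_column_zero, Fin.sum_univ_succ, sub_eq_add_neg, ← Finset.sum_neg_distrib]
  congr 1
  · simp [kroneckerMatrix, Matrix.submatrix]
  refine Finset.sum_congr rfl fun c _ => ?_
  split_ifs with hc
  · subst hc
    have hminor : (kroneckerMatrix (Fin.cons (J c) J) (Fin.cons (J c) I)).submatrix
        c.succ.succAbove Fin.succ = (kroneckerMatrix J I).submatrix c.cycleRange.symm id := by
      ext; simp [kroneckerMatrix, Fin.cons_self_succ_succAbove]
    rw [hminor, Matrix.det_permute, Equiv.Perm.sign_symm, Fin.sign_cycleRange]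
    simp [kroneckerMatrix, pow_succ, ← mul_assoc, ← mul_pow]
  · simp [kroneckerMatrix, hc]

theorem sum_gkdelta_cons_cons {k : ℕ} (J I : Fin k → Fin n) :
    ∑ a : Fin n, gkdelta n (k + 1) (Fin.cons a J) (Fin.cons a I)
      = ((n : ℝ) - k) * gkdelta n k J I := by
  simp only [gkdelta_eq_det, det_kroneckerMatrix_cons_cons, Finset.sum_sub_distrib,
    Finset.sum_const, Finset.card_univ, Fintype.card_fin]
  rw [Finset.sum_comm]
  simp [Finset.sum_ite_eq]
  ring

theorem Fin.sum_univ_pi_cons {α M : Type*} [Fintype α] [AddCommMonoid M] {k : ℕ}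
    (g : (Fin (k + 1) → α) → M) :
    ∑ I, g I = ∑ p, ∑ I : Fin k → α, g (Fin.cons p I) := by
  rw [← (Fin.consEquiv fun _ => α).sum_comp, Fintype.sum_prod_type]
  rfl

theorem Fin.prod_univ_erase_zero {M : Type*} [CommMonoid M] {k : ℕ} (f : Fin (k + 1) → M) :
    ∏ a ∈ Finset.univ.erase 0, f a = ∏ b : Fin k, f b.succ := by
  rw [Fin.univ_succ, Finset.erase_cons, Finset.prod_map]
  rfl

theorem sum_gkdelta_mul_of_commutation (du : Fin n → ℝ) (B : Fin n → Matrix (Fin n) (Fin n) ℝ)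
    (hcomm : ∀ j i s, B j i s - B s i j
        = (if i = j then du s else 0) - (if i = s then du j else 0))
    {k : ℕ} (i : Fin n) (U L : Fin k → Fin n) :
    ∑ j, ∑ p, ∑ q,
        gkdelta n (k + 2) (Fin.cons j (Fin.cons q U)) (Fin.cons i (Fin.cons p L)) * B j p q
      = -((n : ℝ) - (k + 1)) * ∑ j, du j * gkdelta n (k + 1) (Fin.cons j U) (Fin.cons i L) := by
  set δ : Fin n → Fin n → Fin n → ℝ := fun j p q =>
    gkdelta n (k + 2) (Fin.cons j (Fin.cons q U)) (Fin.cons i (Fin.cons p L)) with hδ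
  set S := ∑ j, ∑ p, ∑ q, δ j p q * B j p q
  have antisymm : ∑ j, ∑ p, ∑ q, δ j p q * B q p j = -S := by
    have hswap : ∀ j p q, δ j p q * B q p j = -(δ q p j * B q p j) := fun j p q => by
      simp only [hδ]
      rw [gkdelta_cons_swap_left, neg_mul]
    simp only [hswap, Finset.sum_neg_distrib, S]
    rw [Finset.sum_comm_cycle]
    exact congrArg _ (Finset.sum_congr rfl fun _ _ => Finset.sum_comm)
  have contract_first : ∑ j, ∑ p, ∑ q, δ j p q * (if p = j then du q else 0)
      = -((n : ℝ) - (k + 1)) * ∑ j, du j * gkdelta n (k + 1) (Fin.cons j U) (Fin.cons i L) := by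
    have hcontract : ∀ q, ∑ j, δ j j q
        = -((n : ℝ) - (k + 1)) * gkdelta n (k + 1) (Fin.cons q U) (Fin.cons i L) := fun q => by
      simp only [hδ, gkdelta_cons_swap_right i, Finset.sum_neg_distrib, sum_gkdelta_cons_cons]
      push_cast
      ring
    simp only [mul_ite, mul_zero, Finset.sum_ite_irrel, Finset.sum_const_zero,
      Finset.sum_ite_eq', Finset.mem_univ, if_true]
    rw [Finset.sum_comm]
    simp only [← Finset.sum_mul, hcontract, Finset.mul_sum]
    exact Finset.sum_congr rfl fun q _ => by ring
  have contract_second : ∑ j, ∑ p, ∑ q, δ j p q * (if p = q then du j else 0)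
      = ((n : ℝ) - (k + 1)) * ∑ j, du j * gkdelta n (k + 1) (Fin.cons j U) (Fin.cons i L) := by
    have hcontract : ∀ j, ∑ p, δ j p p
        = ((n : ℝ) - (k + 1)) * gkdelta n (k + 1) (Fin.cons j U) (Fin.cons i L) := fun j => by
      simp only [hδ, gkdelta_cons_swap_left j, gkdelta_cons_swap_right i, neg_neg,
        sum_gkdelta_cons_cons]
      push_cast
      ring
    simp only [mul_ite, mul_zero, Finset.sum_ite_eq, Finset.mem_univ, if_true]
    simp only [← Finset.sum_mul, hcontract, Finset.mul_sum]
    exact Finset.sum_congr rfl fun j _ => by ring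
  have hsub : S - ∑ j, ∑ p, ∑ q, δ j p q * B q p j
      = ∑ j, ∑ p, ∑ q, δ j p q * (if p = j then du q else 0)
        - ∑ j, ∑ p, ∑ q, δ j p q * (if p = q then du j else 0) := by
    simp only [S, ← Finset.sum_sub_distrib, ← mul_sub, hcomm]
  rw [antisymm, contract_first, contract_second] at hsub
  linarith

end GeneralizedKronecker

/-- `A` stands for the Hessian `D²u`, `du` for `∇u` and `B j` for `∇_j (D²u)`; `hcomm` is the
Ricci identity `∇_j u^i_s - ∇_s u^i_j = δ^i_j u_s - δ^i_s u_j` of the round sphere. The left-hand side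
is `∇_j [T_m]^j_i(D²u)`: by the Leibniz rule and the symmetry of `δ`, the `m` terms of the
derivative coincide, which turns `1/m!` into `1/(m-1)!`. -/
theorem div_newton_tensor_general (n m : ℕ) (hm : 1 ≤ m)
    (du : Fin n → ℝ) (A : Matrix (Fin n) (Fin n) ℝ)
    (B : Fin n → Matrix (Fin n) (Fin n) ℝ)
    (hcomm : ∀ j i s, B j i s - B s i j
        = (if i = j then du s else 0) - (if i = s then du j else 0)) :
    ∀ i : Fin n,
      (1 / (Nat.factorial (m-1) : ℝ)) *
        ∑ j : Fin n, ∑ I : Fin m → Fin n, ∑ J : Fin m → Fin n,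
          gkdelta n (m+1) (Fin.cons j J) (Fin.cons i I) *
            B j (I ⟨0, hm⟩) (J ⟨0, hm⟩) *
            ∏ a ∈ Finset.univ.erase (⟨0, hm⟩ : Fin m), A (I a) (J a)
      = -((n:ℝ) - (m:ℝ)) * ∑ j : Fin n, du j * newtonT n (m-1) A j i := by
  obtain ⟨k, rfl⟩ : ∃ k, m = k + 1 := ⟨m - 1, by omega⟩
  intro i
  -- split `I = p :: L`, `J = q :: U` and contract over `j, p, q` for fixed `L, U`
  simp only [Fin.mk_zero, Nat.add_sub_cancel, Fin.sum_univ_pi_cons, Fin.cons_zero,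
    Fin.prod_univ_erase_zero, Fin.cons_succ, ← Finset.sum_mul,
    Finset.sum_comm (s := (Finset.univ : Finset (Fin n)))
      (t := (Finset.univ : Finset (Fin k → Fin n))),
    sum_gkdelta_mul_of_commutation du B hcomm]
  simp only [newtonT, Finset.mul_sum, Finset.sum_mul,
    Finset.sum_comm (s := (Finset.univ : Finset (Fin n)))
      (t := (Finset.univ : Finset (Fin k → Fin n)))]
  refine Finset.sum_congr rfl fun L _ => Finset.sum_congr rfl fun U _ =>
    Finset.sum_congr rfl fun j _ => ?_
  push_cast
  ring

/-- divergence of the Newton tensor of the Hessian on `S^n`, in tensorial form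
at a point. Here `A` stands for the spherical Hessian `D²u` (a symmetric matrix), `du` for
the gradient `∇u`, and `B j` for the covariant derivative `∇_j(D²u)` (each symmetric), subject
to the commutation (Ricci) identity on the round sphere
`∇_j u^i_s − ∇_s u^i_j = δ^i_j u_s − δ^i_s u_j` coming from the curvature
`R^{pl}_{sj} = δ^p_s δ^l_j − δ^p_j δ^l_s`. Then
`∇_j [T_m]^j_i(D²u) = −(n−m) u_j [T_{m−1}]^j_i(D²u)`, where the left-hand side is
`(1/(m−1)!) δ^{j j_1…j_m}_{i i_1…i_m} (∇_j u^{i_1}_{j_1}) u^{i_2}_{j_2} ⋯ u^{i_m}_{j_m}`. -/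
theorem div_newton_tensor (n m : ℕ) (hm : 1 ≤ m) (hmn : m ≤ n - 1)
    (du : Fin n → ℝ) (A : Matrix (Fin n) (Fin n) ℝ)
    (B : Fin n → Matrix (Fin n) (Fin n) ℝ)
    (hA : A.IsSymm) (hB : ∀ j, (B j).IsSymm)
    (hcomm : ∀ j i s, B j i s - B s i j
        = (if i = j then du s else 0) - (if i = s then du j else 0)) :
    ∀ i : Fin n,
      (1 / (Nat.factorial (m-1) : ℝ)) *
        ∑ j : Fin n, ∑ I : Fin m → Fin n, ∑ J : Fin m → Fin n,
          gkdelta n (m+1) (Fin.cons j J) (Fin.cons i I) *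
            B j (I ⟨0, hm⟩) (J ⟨0, hm⟩) *
            ∏ a ∈ Finset.univ.erase (⟨0, hm⟩ : Fin m), A (I a) (J a)
      = -((n:ℝ) - (m:ℝ)) * ∑ j : Fin n, du j * newtonT n (m-1) A j i :=
  div_newton_tensor_general n m hm du A B hcomm
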